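/- Let F(q) = α K log(1 + q) for q ∈ [0,1] and C(q,g) = gθq, with α, K, θ > 0. The CP's single-content utility u(g) = F(q*(g)) − C(q*(g), g) evaluated at the ED best response q*(g) = min(1, gθ/(2cν)) is continuous in g on [0,∞), and for g ≥ 2cν/θ equals α K log 2 − gθ, hence is strictly decreasing there. -/

import Mathlib

open Real Set

/-- The ED's best response `q*(g) = min(1, gθ/d)` to a payment `g`, where `d = 2cν`. -/
noncomputable def bestResponse (θ d g : ℝ) : ℝ := min 1 (g * θ / d)

/-- The CP's utility `a log(1 + q) − gθq` at the ED's best response `q = q*(g)`. -/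
noncomputable def cpUtility (a θ d g : ℝ) : ℝ :=
  a * log (1 + bestResponse θ d g) - g * θ * bestResponse θ d g

lemma bestResponse_nonneg {θ d g : ℝ} (hθ : 0 ≤ θ) (hd : 0 ≤ d) (hg : 0 ≤ g) :
    0 ≤ bestResponse θ d g :=
  le_min zero_le_one (div_nonneg (mul_nonneg hg hθ) hd)

lemma bestResponse_eq_one {θ d g : ℝ} (hθ : 0 < θ) (hd : 0 < d) (hg : d / θ ≤ g) :
    bestResponse θ d g = 1 :=
  min_eq_left <| (one_le_div hd).2 <| (div_le_iff₀ hθ).1 hg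

lemma continuous_bestResponse (θ d : ℝ) : Continuous (bestResponse θ d) := by
  unfold bestResponse
  fun_prop

lemma continuousOn_cpUtility (a : ℝ) {θ d : ℝ} (hθ : 0 ≤ θ) (hd : 0 ≤ d) :
    ContinuousOn (cpUtility a θ d) (Ici 0) := by
  have hq := (continuous_bestResponse θ d).continuousOn (s := Ici 0)
  refine (continuousOn_const.mul ((continuousOn_const.add hq).log fun g hg => ?_)).sub
    ((continuousOn_id.mul continuousOn_const).mul hq)
  have hpos : 0 < 1 + bestResponse θ d g := by
    linarith [bestResponse_nonneg hθ hd (mem_Ici.1 hg)]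
  exact hpos.ne'

lemma cpUtility_eq_of_le {a θ d g : ℝ} (hθ : 0 < θ) (hd : 0 < d) (hg : d / θ ≤ g) :
    cpUtility a θ d g = a * log 2 - g * θ := by
  rw [cpUtility, bestResponse_eq_one hθ hd hg]
  norm_num

lemma strictAnti_const_sub_mul (b : ℝ) {θ : ℝ} (hθ : 0 < θ) :
    StrictAnti fun g : ℝ => b - g * θ :=
  fun _ _ h => sub_lt_sub_left (mul_lt_mul_of_pos_right h hθ) b

theorem stmt_19_general (α K θ c ν : ℝ) (hθ : 0 < θ)
    (hc : 0 < c) (hν : 0 < ν)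
    (u : ℝ → ℝ)
    (hu : ∀ g, u g = α * K * Real.log (1 + min 1 (g * θ / (2 * c * ν))) -
      g * θ * min 1 (g * θ / (2 * c * ν))) :
    ContinuousOn u (Set.Ici (0:ℝ)) ∧
    (∀ g : ℝ, 2 * c * ν / θ ≤ g → u g = α * K * Real.log 2 - g * θ) ∧
    StrictAntiOn u (Set.Ici (2 * c * ν / θ)) := by
  have hd : 0 < 2 * c * ν := by positivity
  have hu' : u = cpUtility (α * K) θ (2 * c * ν) := funext hu
  have hsat : ∀ g : ℝ, 2 * c * ν / θ ≤ g → u g = α * K * log 2 - g * θ := fun g hg => by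
    rw [hu', cpUtility_eq_of_le hθ hd hg]
  refine ⟨hu' ▸ continuousOn_cpUtility _ hθ.le hd.le, hsat, ?_⟩
  exact ((strictAnti_const_sub_mul _ hθ).strictAntiOn _).congr fun g hg => (hsat g hg).symm

/-- The CP's single-content utility u(g) = αK log(1 + q*(g)) − gθ q*(g), with
q*(g) = min(1, gθ/(2cν)), is continuous on [0,∞); for g ≥ 2cν/θ it equals
αK log 2 − gθ and is strictly decreasing there. -/
theorem stmt_19 (α K θ c ν : ℝ) (hα : 0 < α) (hK : 0 < K) (hθ : 0 < θ)
    (hc : 0 < c) (hν : 0 < ν)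
    (u : ℝ → ℝ)
    (hu : ∀ g, u g = α * K * Real.log (1 + min 1 (g * θ / (2 * c * ν))) -
      g * θ * min 1 (g * θ / (2 * c * ν))) :
    ContinuousOn u (Set.Ici (0:ℝ)) ∧
    (∀ g : ℝ, 2 * c * ν / θ ≤ g → u g = α * K * Real.log 2 - g * θ) ∧
    StrictAntiOn u (Set.Ici (2 * c * ν / θ)) :=
  stmt_19_general α K θ c ν hθ hc hν u hu
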